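/- Let (𝔐,𝔤) and (M,g) be closed Riemannian manifolds, π : 𝔐 → M a harmonic morphism with dilation λ, and let ε, q > 0, ω ∈ ℝ, p ∈ (2,∞). Suppose there exist β : M → ℝ and μ : M → (0,∞) such that β ∘ π = α and μ ∘ π = λ². Then u_ε, v_ε : M → ℝ solve −ε²Δ_g u + (β(x)/μ(x))u = (1/μ(x))u^{p−1} + (ω²/μ(x))(qv−1)²u and −Δ_g v + (1/μ(x))(1+qu²)v = (q/μ(x))u² on M if and only if 𝔲_ε := u_ε ∘ π and 𝔳_ε := v_ε ∘ π solve −ε²Δ_𝔤𝔲 + α(x)𝔲 = 𝔲^{p−1} + ω²(q𝔳−1)²𝔲 and −Δ_𝔤𝔳 + (1+q𝔲²)𝔳 = q𝔲² on 𝔐. -/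
import Mathlib


/-- The divergence-form differential operators of a Riemannian manifold, recorded
abstractly: `divOp c u = div_g (c ∇_g u)`.  In particular
`divOp (fun _ => 1) u = Δ_g u` is the Laplace–Beltrami operator. -/
structure LaplaceOps (X : Type) where
  divOp : (X → ℝ) → (X → ℝ) → (X → ℝ)

/-- **Proposition 1.2.** Let `π : 𝔐 → M` be a harmonic morphism with dilation
`λ` (so that `Δ_𝔤(u∘π) = λ²[(Δ_g u)∘π]`), and suppose `β ∘ π = α` and
`μ ∘ π = λ²` with `μ > 0`.  Then `u_ε, v_ε : M → ℝ` solve the system (eq:M) on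
`M` if and only if `𝔲_ε = u_ε ∘ π`, `𝔳_ε = v_ε ∘ π` solve the system (eq:Mfrac)
on `𝔐`. -/
theorem harmonic_morphism_reduction
    (Mfrak M : Type)
    (fOps : LaplaceOps Mfrak) (gOps : LaplaceOps M)
    (π : Mfrak → M) (hπ : Function.Surjective π)
    (lam : Mfrak → ℝ)
    (hhm : ∀ u : M → ℝ, ∀ z : Mfrak,
      fOps.divOp (fun _ => 1) (fun w => u (π w)) z =
        lam z ^ 2 * gOps.divOp (fun _ => 1) u (π z))
    (ε q : ℝ) (hε : 0 < ε) (hq : 0 < q) (ω p : ℝ) (hp : 2 < p)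
    (α : Mfrak → ℝ) (β : M → ℝ) (μ : M → ℝ) (hμ : ∀ x, 0 < μ x)
    (hβ : ∀ z, β (π z) = α z) (hμπ : ∀ z, μ (π z) = lam z ^ 2)
    (u v : M → ℝ) :
    ((∀ x : M,
        -(ε ^ 2) * gOps.divOp (fun _ => 1) u x + β x / μ x * u x =
          (1 / μ x) * u x ^ (p - 1) + ω ^ 2 / μ x * (q * v x - 1) ^ 2 * u x) ∧
      (∀ x : M,
        -gOps.divOp (fun _ => 1) v x + (1 / μ x) * (1 + q * u x ^ 2) * v x =
          q / μ x * u x ^ 2))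
    ↔
    ((∀ z : Mfrak,
        -(ε ^ 2) * fOps.divOp (fun _ => 1) (fun w => u (π w)) z + α z * u (π z) =
          u (π z) ^ (p - 1) + ω ^ 2 * (q * v (π z) - 1) ^ 2 * u (π z)) ∧
      (∀ z : Mfrak,
        -fOps.divOp (fun _ => 1) (fun w => v (π w)) z + (1 + q * u (π z) ^ 2) * v (π z) =
          q * u (π z) ^ 2)) := by
  constructor
  · rintro ⟨h1, h2⟩
    refine ⟨fun z => ?_, fun z => ?_⟩
    · have hne := (hμ (π z)).ne'
      have e := h1 (π z)
      rw [hhm u z, ← hμπ z, ← hβ z]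
      field_simp at e
      linarith [e]
    · have hne := (hμ (π z)).ne'
      have e := h2 (π z)
      rw [hhm v z, ← hμπ z]
      field_simp at e
      linarith [e]
  · rintro ⟨h1, h2⟩
    refine ⟨fun x => ?_, fun x => ?_⟩
    · obtain ⟨z, rfl⟩ := hπ x
      have hne := (hμ (π z)).ne'
      have e := h1 z
      rw [hhm u z, ← hμπ z, ← hβ z] at e
      field_simp
      linarith [e]
    · obtain ⟨z, rfl⟩ := hπ x
      have hne := (hμ (π z)).ne'
      have e := h2 z
      rw [hhm v z, ← hμπ z] at e
      field_simp
      linarith [e]
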